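/- Let p be a prime, k ≥ 1, n = p^k, and let c : Z_n → Z_n be a p-good coloring. Let a, b be integers with p dividing b. Then the sum c(a) + c(a+b) + ... + c(a + (n/p - 1)b), computed in Z_n with arguments reduced modulo n, is a multiple of n/p in Z_n. -/

import Mathlib

/-! Write `b = p ^ j * u` with `p ∤ u`. If `j ≥ k`, every term equals `c a`. Otherwise the step
`p ^ (k - 1 - j) • b = u • p ^ (k - 1)` generates the subgroup of order `p`, so the indices split
into classes mod `p ^ (k - 1 - j)`, each made of full runs of `p` points of a coset of that
subgroup; since multiplication by `u` permutes `ZMod p`, each run is a coset enumerated in another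
order, so `c` sums to zero on it by goodness, and the whole sum vanishes. -/

open Finset

theorem sum_range_mul_eq_sum_sum {M : Type*} [AddCommMonoid M] (f : ℕ → M) (m n : ℕ) :
    ∑ i ∈ range (m * n), f i = ∑ q ∈ range n, ∑ r ∈ range m, f (q * m + r) := by
  induction n with
  | zero => simp
  | succ n ih => rw [Nat.mul_succ, sum_range_add, ih, sum_range_succ, mul_comm m n]

theorem sum_range_natCast_eq_sum_zmod {M : Type*} [AddCommMonoid M] (n : ℕ) [NeZero n]
    (F : ZMod n → M) : ∑ t ∈ range n, F t = ∑ z, F z :=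
  sum_nbij' (↑) ZMod.val (fun _ _ ↦ mem_univ _) (fun z _ ↦ mem_range.mpr z.val_lt)
    (fun _ ht ↦ ZMod.val_cast_of_lt (mem_range.mp ht)) (fun z _ ↦ ZMod.natCast_zmod_val z)
    (fun _ _ ↦ rfl)

section Progressions

variable {G M : Type*} [AddCommMonoid M] (f : G → M)

theorem sum_range_mul_add_nsmul_eq_zero [AddMonoid G] {m : ℕ} {h : G} (hh : m • h = 0)
    (hf : ∀ y, ∑ t ∈ range m, f (y + t • h) = 0) (y : G) (q : ℕ) :
    ∑ s ∈ range (m * q), f (y + s • h) = 0 := by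
  induction q with
  | zero => simp
  | succ q ih =>
    rw [Nat.mul_succ, sum_range_add, ih, zero_add, ← hf y]
    refine sum_congr rfl fun t _ ↦ ?_
    rw [add_nsmul, mul_nsmul, hh, nsmul_zero, zero_add]

theorem sum_range_mul_add_nsmul_eq_zero_of_nsmul_step [AddCommMonoid G] {g : G} {l N : ℕ}
    (hf : ∀ y, ∑ s ∈ range N, f (y + s • l • g) = 0) (x : G) :
    ∑ i ∈ range (l * N), f (x + i • g) = 0 := by
  rw [sum_range_mul_eq_sum_sum, sum_comm]
  refine sum_eq_zero fun r _ ↦ (sum_congr rfl fun s _ ↦ ?_).trans (hf (x + r • g))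
  rw [add_nsmul, mul_nsmul', add_assoc, add_comm (s • l • g)]

theorem sum_range_add_nsmul_zsmul_of_isUnit [AddCommGroup G] {n : ℕ} [NeZero n] {h : G}
    (hh : n • h = 0) {u : ℤ} (hu : IsUnit (u : ZMod n)) (x : G) :
    ∑ t ∈ range n, f (x + t • u • h) = ∑ t ∈ range n, f (x + t • h) := by
  -- `ψ z = z • h` turns the step `u • h` into multiplication by the unit `u` in `ZMod n`.
  let ψ : ZMod n →+ G := ZMod.lift n ⟨zmultiplesHom G h, by simpa using hh⟩
  have hψ (z : ℤ) : ψ z = z • h := ZMod.lift_coe _ _ z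
  obtain ⟨v, hv⟩ := hu
  calc ∑ t ∈ range n, f (x + t • u • h) = ∑ t ∈ range n, f (x + ψ (t * u)) := by
        refine sum_congr rfl fun t _ ↦ ?_
        rw [← Int.cast_natCast, ← Int.cast_mul, hψ, mul_zsmul, natCast_zsmul]
    _ = ∑ z, f (x + ψ (z * u)) := sum_range_natCast_eq_sum_zmod n fun z ↦ f (x + ψ (z * u))
    _ = ∑ z, f (x + ψ z) := Fintype.sum_equiv (Units.mulRight v) _ _ fun z ↦ by simp [hv]
    _ = ∑ t ∈ range n, f (x + t • h) := by
        rw [← sum_range_natCast_eq_sum_zmod]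
        refine sum_congr rfl fun t _ ↦ ?_
        rw [← Int.cast_natCast, hψ, natCast_zsmul]

end Progressions

theorem exists_eq_pow_mul_of_dvd_of_not_pow_dvd {p : ℕ} (hp : p ≠ 1) {e : ℕ} {b : ℤ}
    (hb : (p : ℤ) ∣ b) (hpb : ¬ (p : ℤ) ^ (e + 1) ∣ b) :
    ∃ j u, 1 ≤ j ∧ j ≤ e ∧ ¬ (p : ℤ) ∣ u ∧ b = p ^ j * u := by
  have hfin : FiniteMultiplicity (p : ℤ) b := Int.finiteMultiplicity_iff.mpr
    ⟨by simpa using hp, by rintro rfl; exact hpb (dvd_zero _)⟩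
  obtain ⟨u, hbu, hu⟩ := hfin.exists_eq_pow_mul_and_not_dvd
  refine ⟨_, u, ?_, ?_, hu, hbu⟩
  · by_contra! h0
    rw [Nat.lt_one_iff.mp h0, pow_zero, one_mul] at hbu
    exact hu (hbu ▸ hb)
  · by_contra! he
    exact hpb (hbu ▸ (pow_dvd_pow _ he).mul_right u)

theorem sum_range_add_nsmul_pow_mul_eq_zero {p e : ℕ} (hp : p.Prime)
    {c : ZMod (p ^ (e + 1)) → ZMod (p ^ (e + 1))}
    (hc : ∀ y, ∑ t ∈ range p, c (y + t • ((p ^ e : ℕ) : ZMod (p ^ (e + 1)))) = 0)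
    {j : ℕ} (hj : 1 ≤ j) (hje : j ≤ e) {u : ℤ} (hu : ¬ (p : ℤ) ∣ u) (x : ZMod (p ^ (e + 1))) :
    ∑ i ∈ range (p ^ e), c (x + i • ((p ^ j * u : ℤ) : ZMod (p ^ (e + 1)))) = 0 := by
  have := Fact.mk hp
  have hh : p • ((p ^ e : ℕ) : ZMod (p ^ (e + 1))) = 0 := by
    rw [nsmul_eq_mul, ← Nat.cast_mul, ← pow_succ', ZMod.natCast_self]
  have hlift : p ^ (e - j) • ((p ^ j * u : ℤ) : ZMod (p ^ (e + 1)))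
      = u • ((p ^ e : ℕ) : ZMod (p ^ (e + 1))) := by
    rw [nsmul_eq_mul, zsmul_eq_mul]; push_cast
    rw [← mul_assoc, ← pow_add, Nat.sub_add_cancel hje, mul_comm]
  have hsplit : p ^ e = p ^ (e - j) * (p * p ^ (j - 1)) := by
    rw [← pow_succ', Nat.sub_add_cancel hj, ← pow_add, Nat.sub_add_cancel hje]
  have hunit : IsUnit (u : ZMod p) := by
    rwa [isUnit_iff_ne_zero, Ne, ZMod.intCast_zmod_eq_zero_iff_dvd]
  rw [hsplit]
  refine sum_range_mul_add_nsmul_eq_zero_of_nsmul_step c (fun y ↦ ?_) x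
  rw [hlift]
  refine sum_range_mul_add_nsmul_eq_zero c (by rw [smul_comm, hh, smul_zero]) (fun y ↦ ?_) y _
  rw [sum_range_add_nsmul_zsmul_of_isUnit c hh hunit, hc]

/-- For a prime `p`, `n = p^k`, a `p`-good coloring `c` and `p ∣ b`,
the sum of `c` along `a, a+b, …, a+(n/p - 1)b` (mod `n`) is a multiple of
`n/p = p^(k-1)` in `ZMod n`. -/
theorem p_good_coloring_partial_progression (p : ℕ) (hp : p.Prime) (k : ℕ) (hk : 1 ≤ k)
    (c : ZMod (p ^ k) → ZMod (p ^ k))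
    (hc : ∀ a : ZMod (p ^ k),
      ∑ i ∈ Finset.range p, c (a + ((i * p ^ (k - 1) : ℕ) : ZMod (p ^ k))) = 0)
    (a b : ℤ) (hb : (p : ℤ) ∣ b) :
    ∃ m : ZMod (p ^ k),
      ∑ i ∈ Finset.range (p ^ (k - 1)), c (((a + (i : ℤ) * b : ℤ) : ZMod (p ^ k)))
        = m * ((p ^ (k - 1) : ℕ) : ZMod (p ^ k)) := by
  obtain ⟨e, rfl⟩ : ∃ e, k = e + 1 := ⟨k - 1, by omega⟩
  simp only [Nat.add_sub_cancel] at hc ⊢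
  simp only [Nat.cast_mul, ← nsmul_eq_mul] at hc
  have hterm (i : ℕ) :
      ((a + i * b : ℤ) : ZMod (p ^ (e + 1))) = a + i • (b : ZMod (p ^ (e + 1))) := by
    push_cast; rw [nsmul_eq_mul]
  simp only [hterm]
  by_cases hpb : (p : ℤ) ^ (e + 1) ∣ b
  · have hb0 : (b : ZMod (p ^ (e + 1))) = 0 := by
      exact_mod_cast (ZMod.intCast_zmod_eq_zero_iff_dvd b _).mpr (by exact_mod_cast hpb)
    exact ⟨c a, by simp [hb0, nsmul_eq_mul, mul_comm]⟩
  · obtain ⟨j, u, hj, hje, hu, rfl⟩ := exists_eq_pow_mul_of_dvd_of_not_pow_dvd hp.ne_one hb hpb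
    exact ⟨0, by rw [zero_mul]; exact sum_range_add_nsmul_pow_mul_eq_zero hp hc hj hje hu a⟩
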